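/- Let k, n, p ≥ 1, s ∈ {−1, 1}, let x_1, …, x_k ∈ ℝ^d be orthonormal, and let y_1, …, y_k be nonzero reals with sign s. Let D = (1/√k) Σ_{i=1}^k y_i x_i and let P denote the orthogonal projection of ℝ^d onto span{x_1,…,x_k}. Let w : [0,∞) → ℝ^d be differentiable with ⟨w(t), x_i⟩ > 0 for all t ≥ 0 and all i, set a(t) = s · ( Σ_{i=1}^k ⟨w(t), x_i⟩² )^{1/2}, r_i(t) = y_i − (a(t)/p) ⟨w(t), x_i⟩, and assume w'(t) = (a(t)/n) Σ_{i=1}^k r_i(t) x_i. Then, writing N(t) = Σ_{i=1}^k ⟨w(t), x_i⟩² and h(t) = ⟨ D/‖D‖ , s · P w(t)/‖P w(t)‖ ⟩, one has N'(t) = (2/n) N(t) ( √k ‖D‖ h(t) − N(t)/p ) for all t ≥ 0. -/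

import Mathlib

/-!
Each active coordinate `c i = ⟪w, x i⟫` moves by `c i' = (a / n) * r i`, so
`N' = ∑ 2 c i c i' = (2a / n) (∑ y i c i - (a / p) N)`. The balanced initialization gives
`a = s √N` and `a² = N`. Since `P w = ∑ c i • x i` has norm `√N`, the alignment term is
`√k ‖D‖ h = s ∑ y i c i / √N`, and multiplying it by `N` gives back `a ∑ y i c i`.
-/

open scoped RealInnerProductSpace

open Finset Submodule

section Orthonormal

variable {𝕜 E ι : Type*} [RCLike 𝕜] [NormedAddCommGroup E] [InnerProductSpace 𝕜 E] [Fintype ι]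
  {x : ι → E}

theorem Orthonormal.starProjection_span_range [(span 𝕜 (Set.range x)).HasOrthogonalProjection]
    (hx : Orthonormal 𝕜 x) (w : E) :
    (span 𝕜 (Set.range x)).starProjection w = ∑ i, inner 𝕜 (x i) w • x i := by
  refine eq_starProjection_of_mem_orthogonal
    (sum_mem fun i _ => smul_mem _ _ (subset_span ⟨i, rfl⟩)) ?_
  refine (isOrtho_span.2 ?_).le (mem_span_singleton_self _)
  rintro u rfl _ ⟨j, rfl⟩
  rw [inner_sub_left, hx.inner_left_fintype, inner_conj_symm, sub_self]

end Orthonormal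

section Real

variable {E ι : Type*} [NormedAddCommGroup E] [InnerProductSpace ℝ E] [Fintype ι]

theorem Orthonormal.norm_sum_smul_sq {x : ι → E} (hx : Orthonormal ℝ x) (c : ι → ℝ) :
    ‖∑ i, c i • x i‖ ^ 2 = ∑ i, c i ^ 2 := by
  rw [← real_inner_self_eq_norm_sq, hx.inner_sum]
  simp only [conj_trivial, sq]

theorem norm_mul_inner_inv_norm_smul (u v : E) : ‖u‖ * ⟪‖u‖⁻¹ • u, v⟫ = ⟪u, v⟫ := by
  rcases eq_or_ne u 0 with rfl | hu
  · simp
  · rw [real_inner_smul_left, mul_inv_cancel_left₀ (norm_ne_zero_iff.2 hu)]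

theorem HasDerivAt.sum_inner_sq {w : ℝ → E} {w' : E} {t : ℝ} (hw : HasDerivAt w w' t)
    (x : ι → E) :
    HasDerivAt (fun τ => ∑ i, ⟪w τ, x i⟫ ^ 2) (∑ i, 2 * ⟪w t, x i⟫ * ⟪w', x i⟫) t := by
  refine HasDerivAt.fun_sum fun i _ => ?_
  simpa [mul_comm] using ((hw.inner ℝ (hasDerivAt_const t (x i))).fun_pow 2)

theorem sum_two_mul_mul_mul_sub_mul (c y : ι → ℝ) (a b : ℝ) :
    ∑ i, 2 * c i * (a * (y i - b * c i)) = 2 * a * (∑ i, y i * c i - b * ∑ i, c i ^ 2) := by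
  simp only [mul_sub, mul_sum, ← sum_sub_distrib]
  exact sum_congr rfl fun i _ => by ring

end Real

theorem active_norm_dynamics_general
    (d k n p : ℕ) (hk : 1 ≤ k)
    (s : ℝ) (hs : s = 1 ∨ s = -1)
    (x : Fin k → EuclideanSpace ℝ (Fin d)) (hx : Orthonormal ℝ x)
    (y : Fin k → ℝ)
    (D : EuclideanSpace ℝ (Fin d))
    (hD : D = (1 / Real.sqrt k) • ∑ i, y i • x i)
    (w : ℝ → EuclideanSpace ℝ (Fin d))
    (aNeuron : ℝ → ℝ)
    (haNeuron : ∀ t, aNeuron t = s * Real.sqrt (∑ i, ⟪w t, x i⟫ ^ 2))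
    (r : Fin k → ℝ → ℝ)
    (hr : ∀ i t, r i t = y i - (aNeuron t / (p : ℝ)) * ⟪w t, x i⟫)
    (hw : ∀ t, 0 ≤ t →
      HasDerivAt w ((aNeuron t / (n : ℝ)) • ∑ i, r i t • x i) t)
    (Pw : ℝ → EuclideanSpace ℝ (Fin d))
    (hPw : ∀ t, Pw t =
      (Submodule.orthogonalProjection (Submodule.span ℝ (Set.range x)) (w t) :
        EuclideanSpace ℝ (Fin d)))
    (h : ℝ → ℝ)
    (hh : ∀ t, h t = ⟪‖D‖⁻¹ • D, s • ‖Pw t‖⁻¹ • Pw t⟫)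
    (N : ℝ → ℝ)
    (hN : ∀ t, N t = ∑ i, ⟪w t, x i⟫ ^ 2) :
    ∀ t, 0 ≤ t →
      HasDerivAt N
        ((2 / (n : ℝ)) * N t * (Real.sqrt k * ‖D‖ * h t - N t / (p : ℝ))) t := by
  intro t ht
  set A := ∑ i, y i * ⟪w t, x i⟫
  have hPwt : Pw t = ∑ i, ⟪w t, x i⟫ • x i := by
    rw [hPw, ← starProjection_apply, hx.starProjection_span_range]
    simp only [real_inner_comm (w t)]
  have hnorm : ‖Pw t‖ = √(N t) := by
    rw [hN, ← hx.norm_sum_smul_sq, ← hPwt, Real.sqrt_sq (norm_nonneg _)]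
  have halign : √k * ‖D‖ * h t = s * A / √(N t) := by
    have hk0 : √(k : ℝ) ≠ 0 := by positivity
    rw [hh, mul_assoc, norm_mul_inner_inv_norm_smul, hD, real_inner_smul_left,
      real_inner_smul_right, real_inner_smul_right, hnorm, hPwt, hx.inner_sum]
    simp only [conj_trivial, A]
    field_simp
  have hcoord : ∀ i, ⟪(aNeuron t / n) • ∑ j, r j t • x j, x i⟫
      = aNeuron t / n * (y i - aNeuron t / p * ⟪w t, x i⟫) := fun i => by
    rw [real_inner_smul_left, hx.inner_left_fintype, hr, conj_trivial]
  have hderiv := (hw t ht).sum_inner_sq x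
  simp only [hcoord, sum_two_mul_mul_mul_sub_mul, ← hN] at hderiv
  have ha : aNeuron t = s * √(N t) := by rw [haNeuron, hN]
  have ha2 : aNeuron t ^ 2 = N t := by
    have hs2 : s ^ 2 = 1 := by rcases hs with rfl | rfl <;> norm_num
    rw [ha, mul_pow, hs2, one_mul, Real.sq_sqrt (hN t ▸ by positivity)]
  convert hderiv using 1
  rw [halign]
  linear_combination (2 * s * A / n) * Real.div_sqrt (x := N t) + (2 * N t / (n * p)) * ha2
    - (2 * A / n) * ha

/-- For the decoupled single-neuron dynamics on orthonormal data
with outputs of sign `s`, the squared active norm `N(t) = Σ_i ⟪w(t),x_i⟫²` satisfies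
`N' = (2/n) N (√k ‖D‖ h - N/p)`, where `h` is the alignment with `D̄`. -/
theorem active_norm_dynamics
    (d k n p : ℕ) (hk : 1 ≤ k) (hn : 1 ≤ n) (hp : 1 ≤ p)
    (s : ℝ) (hs : s = 1 ∨ s = -1)
    (x : Fin k → EuclideanSpace ℝ (Fin d)) (hx : Orthonormal ℝ x)
    (y : Fin k → ℝ) (hy : ∀ i, 0 < s * y i)
    (D : EuclideanSpace ℝ (Fin d))
    (hD : D = (1 / Real.sqrt k) • ∑ i, y i • x i)
    (w : ℝ → EuclideanSpace ℝ (Fin d))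
    (hwact : ∀ t, 0 ≤ t → ∀ i, 0 < ⟪w t, x i⟫)
    (aNeuron : ℝ → ℝ)
    (haNeuron : ∀ t, aNeuron t = s * Real.sqrt (∑ i, ⟪w t, x i⟫ ^ 2))
    (r : Fin k → ℝ → ℝ)
    (hr : ∀ i t, r i t = y i - (aNeuron t / (p : ℝ)) * ⟪w t, x i⟫)
    (hw : ∀ t, 0 ≤ t →
      HasDerivAt w ((aNeuron t / (n : ℝ)) • ∑ i, r i t • x i) t)
    (Pw : ℝ → EuclideanSpace ℝ (Fin d))
    (hPw : ∀ t, Pw t =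
      (Submodule.orthogonalProjection (Submodule.span ℝ (Set.range x)) (w t) :
        EuclideanSpace ℝ (Fin d)))
    (h : ℝ → ℝ)
    (hh : ∀ t, h t = ⟪‖D‖⁻¹ • D, s • ‖Pw t‖⁻¹ • Pw t⟫)
    (N : ℝ → ℝ)
    (hN : ∀ t, N t = ∑ i, ⟪w t, x i⟫ ^ 2) :
    ∀ t, 0 ≤ t →
      HasDerivAt N
        ((2 / (n : ℝ)) * N t * (Real.sqrt k * ‖D‖ * h t - N t / (p : ℝ))) t :=
  active_norm_dynamics_general d k n p hk s hs x hx y D hD w aNeuron haNeuron r hr hw Pw hPw h hh N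
    hN
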